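/- arXiv:2004.05927 — 2 statements merged into one kernel-verified Lean document; each statement's English description precedes it below -/
import Mathlib

section
/- Let w : [1,∞) → [1,∞) be increasing with ∫₁^∞ du/w(u) < ∞, and let L₀, L₁ : [0,∞) → [1,∞) be nondecreasing with L₀(t)+L₁(t) = t+2. Then ∫₀^∞ (1{X_u=0}/ (w(L₀(u)) w(L₁(u))²) + 1{X_u=1}/(w(L₁(u)) w(L₀(u))²)) du ≤ 2 ∫₁^∞ du/w(u), where at each time u exactly one indicator is 1 and the corresponding local time increases at unit rate. -/
/-!
Since `w ≥ 1`, the integrand at time `u` is at most `1{X_u = i} / w(L_i(u))` summed over `i`.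
The local time `L_i` grows at unit rate exactly on `{X = i}`, so Lebesgue measure on
`{X = i} ∩ (0, ∞)`, pushed forward by `L_i`, is dominated by Lebesgue measure on `(1, ∞)`.
As `1 / w` is decreasing, it suffices to compare the two measures on the superlevel sets of
`1 / w` (layer cake), and these are initial segments; hence each state contributes at most
`∫₁^∞ du / w(u)`.
-/

open MeasureTheory Set intervalIntegral

lemma measure_Ioi_inter_preimage_le_of_isLowerSet {μ ν : Measure ℝ} {L : ℝ → ℝ} (hL : Monotone L)
    {a b : ℝ} (hμν : ∀ u, a < u → μ (Ioc a u) ≤ ν (Ioc b (L u)))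
    {S : Set ℝ} (hS : IsLowerSet S) :
    μ (Ioi a ∩ L ⁻¹' S) ≤ ν (Ioi b ∩ S) := by
  set U := Ioi a ∩ L ⁻¹' S
  -- `U` is an initial segment of `Ioi a`: it has a largest element or is a countable union
  -- of the intervals `Ioc a q` with `q ∈ U` rational.
  have hIoc : ∀ u ∈ U, Ioc a u ⊆ U := fun u hu v hv =>
    (⟨hv.1, hS (hL hv.2) hu.2⟩ : v ∈ Ioi a ∩ L ⁻¹' S)
  have hbound : ∀ u ∈ U, μ (Ioc a u) ≤ ν (Ioi b ∩ S) := fun u hu =>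
    (hμν u hu.1).trans <| measure_mono fun x hx => (⟨hx.1, hS hx.2 hu.2⟩ : x ∈ Ioi b ∩ S)
  by_cases hmax : ∃ m ∈ U, ∀ u ∈ U, u ≤ m
  · obtain ⟨m, hm, hle⟩ := hmax
    exact (measure_mono fun u hu => (⟨hu.1, hle u hu⟩ : u ∈ Ioc a m)).trans (hbound m hm)
  · push Not at hmax
    have hcover : U ⊆ ⋃ q : {q : ℚ // (q : ℝ) ∈ U}, Ioc a (q : ℝ) := by
      intro u hu
      obtain ⟨v, hv, huv⟩ := hmax u hu
      obtain ⟨q, huq, hqv⟩ := exists_rat_btwn huv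
      exact mem_iUnion.2 ⟨⟨q, hIoc v hv ⟨hu.1.trans huq, hqv.le⟩⟩, hu.1, huq.le⟩
    have hmono : Monotone fun q : {q : ℚ // (q : ℝ) ∈ U} => Ioc a (q : ℝ) :=
      fun q q' h => Ioc_subset_Ioc_right (by exact_mod_cast h)
    calc μ U ≤ μ (⋃ q : {q : ℚ // (q : ℝ) ∈ U}, Ioc a (q : ℝ)) := measure_mono hcover
      _ = ⨆ q : {q : ℚ // (q : ℝ) ∈ U}, μ (Ioc a (q : ℝ)) := hmono.measure_iUnion
      _ ≤ ν (Ioi b ∩ S) := iSup_le fun q => hbound q q.2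

lemma lintegral_comp_le_of_measure_Ioc_le {μ ν : Measure ℝ} {L : ℝ → ℝ} (hL : Monotone L)
    {a b : ℝ} (hμν : ∀ u, a < u → μ (Ioc a u) ≤ ν (Ioc b (L u)))
    {f : ℝ → ℝ} (hf : Antitone f) (hf0 : 0 ≤ f) :
    ∫⁻ u in Ioi a, ENNReal.ofReal (f (L u)) ∂μ ≤ ∫⁻ x in Ioi b, ENNReal.ofReal (f x) ∂ν := by
  rw [lintegral_eq_lintegral_meas_lt (f := fun u => f (L u)) _ (ae_of_all _ fun u => hf0 (L u))
      (hf.measurable.comp hL.measurable).aemeasurable,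
    lintegral_eq_lintegral_meas_lt _ (ae_of_all _ hf0) hf.measurable.aemeasurable]
  refine lintegral_mono fun t => ?_
  rw [Measure.restrict_apply' measurableSet_Ioi, Measure.restrict_apply' measurableSet_Ioi,
    inter_comm, inter_comm _ (Ioi b)]
  exact measure_Ioi_inter_preimage_le_of_isLowerSet hL hμν
    (isLowerSet_setOfPred.2 fun x y hxy h => h.trans_le (hf hxy))

lemma integral_le_of_lintegral_enorm_le {α : Type*} [MeasurableSpace α] {μ : Measure α}
    {f : α → ℝ} {c : ℝ} (hc : 0 ≤ c) (h : ∫⁻ x, ‖f x‖ₑ ∂μ ≤ ENNReal.ofReal c) :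
    ∫ x, f x ∂μ ≤ c := by
  have habs := (enorm_integral_le_lintegral_enorm f).trans h
  rw [Real.enorm_eq_ofReal_abs, ENNReal.ofReal_le_ofReal_iff hc] at habs
  exact (le_abs_self _).trans habs

lemma intervalIntegrable_indicator_one {B : Set ℝ} (hB : MeasurableSet B) (a b : ℝ) :
    IntervalIntegrable (B.indicator (1 : ℝ → ℝ)) volume a b :=
  intervalIntegrable_iff.2 ((integrableOn_const measure_Ioc_lt_top.ne).indicator hB)

def IsLocalTime (B : Set ℝ) (L : ℝ → ℝ) : Prop :=
  ∀ t, L t = 1 + ∫ u in (0 : ℝ)..t, B.indicator 1 u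

namespace IsLocalTime

variable {B : Set ℝ} {L : ℝ → ℝ}

lemma monotone (hB : MeasurableSet B) (hL : IsLocalTime B L) : Monotone L := by
  intro s t hst
  have hdiff := integral_interval_sub_left (intervalIntegrable_indicator_one hB 0 t)
    (intervalIntegrable_indicator_one hB 0 s)
  have hnonneg : 0 ≤ ∫ u in s..t, B.indicator (1 : ℝ → ℝ) u :=
    integral_nonneg hst fun u _ => indicator_nonneg (fun _ _ => zero_le_one) u
  rw [hL s, hL t]
  linarith

lemma sub_one_eq_measureReal (hB : MeasurableSet B) (hL : IsLocalTime B L) {u : ℝ}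
    (hu : 0 ≤ u) : L u - 1 = volume.real (B ∩ Ioc 0 u) := by
  rw [hL u, add_sub_cancel_left, integral_of_le hu, integral_indicator_one hB,
    measureReal_restrict_apply hB, inter_comm]

lemma one_le (hB : MeasurableSet B) (hL : IsLocalTime B L) {u : ℝ} (hu : 0 ≤ u) : 1 ≤ L u :=
  sub_nonneg.1 (hL.sub_one_eq_measureReal hB hu ▸ measureReal_nonneg)

lemma volume_inter_Ioc (hB : MeasurableSet B) (hL : IsLocalTime B L) {u : ℝ} (hu : 0 ≤ u) :
    volume (B ∩ Ioc 0 u) = ENNReal.ofReal (L u - 1) := by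
  rw [hL.sub_one_eq_measureReal hB hu,
    ofReal_measureReal (measure_inter_lt_top_of_right_ne_top measure_Ioc_lt_top.ne).ne]

lemma lintegral_indicator_le (hB : MeasurableSet B) (hL : IsLocalTime B L) {f : ℝ → ℝ}
    (hf : Antitone f) (hf0 : 0 ≤ f) :
    ∫⁻ u in Ioi 0, B.indicator (fun u => ENNReal.ofReal (f (L u))) u ≤
      ∫⁻ x in Ioi 1, ENNReal.ofReal (f x) := by
  rw [lintegral_indicator hB, Measure.restrict_comm hB]
  refine lintegral_comp_le_of_measure_Ioc_le (hL.monotone hB) (fun u hu => ?_) hf hf0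
  rw [Measure.restrict_apply measurableSet_Ioc, inter_comm, hL.volume_inter_Ioc hB hu.le,
    Real.volume_Ioc]

end IsLocalTime

lemma isLocalTime_setOf_eq {X : ℝ → ℕ} {i : ℕ} {L : ℝ → ℝ}
    (hL : ∀ t, L t = 1 + ∫ u in (0:ℝ)..t, (if X u = i then (1:ℝ) else 0)) :
    IsLocalTime {u | X u = i} L := fun t => by
  simp only [hL t, indicator_apply, mem_ofPred_eq, Pi.one_apply]

lemma enorm_ite_div_mul_sq_le {p : Prop} [Decidable p] {a b : ℝ} (ha : 1 ≤ a) (hb : 1 ≤ b) :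
    ‖(if p then (1 : ℝ) else 0) / (a * b ^ 2)‖ₑ ≤ if p then ENNReal.ofReal (1 / a) else 0 := by
  split_ifs
  · rw [Real.enorm_of_nonneg (by positivity)]
    exact ENNReal.ofReal_le_ofReal <| one_div_le_one_div_of_le (by positivity) <|
      le_mul_of_one_le_right (by positivity) (one_le_pow₀ hb)
  · simp

lemma enorm_ite_div_add_ite_div_le {p q : Prop} [Decidable p] [Decidable q] {a b : ℝ}
    (ha : 1 ≤ a) (hb : 1 ≤ b) :
    ‖(if p then (1 : ℝ) else 0) / (a * b ^ 2) + (if q then (1 : ℝ) else 0) / (b * a ^ 2)‖ₑ ≤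
      (if p then ENNReal.ofReal (1 / a) else 0) + if q then ENNReal.ofReal (1 / b) else 0 :=
  (enorm_add_le _ _).trans <|
    add_le_add (enorm_ite_div_mul_sq_le ha hb) (enorm_ite_div_mul_sq_le hb ha)

lemma antitone_one_div_comp_max {w : ℝ → ℝ} (hmono : MonotoneOn w (Ici 1))
    (hge : ∀ u ∈ Ici (1 : ℝ), 1 ≤ w u) : Antitone fun x => 1 / w (max x 1) :=
  fun x y hxy => one_div_le_one_div_of_le (zero_lt_one.trans_le (hge _ (le_max_right x 1)))
    (hmono (mem_Ici.2 (le_max_right x 1)) (mem_Ici.2 (le_max_right y 1)) (max_le_max_right 1 hxy))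

lemma lintegral_ofReal_one_div_max_eq {w : ℝ → ℝ} (hge : ∀ u ∈ Ici (1 : ℝ), 1 ≤ w u)
    (hint : IntegrableOn (fun u => 1 / w u) (Ici 1)) :
    ∫⁻ x in Ioi 1, ENNReal.ofReal (1 / w (max x 1)) = ENNReal.ofReal (∫ x in Ioi 1, 1 / w x) := by
  rw [ofReal_integral_eq_lintegral_ofReal (hint.mono_set Ioi_subset_Ici_self)
    (ae_restrict_of_forall_mem measurableSet_Ioi fun x hx =>
      one_div_nonneg.2 (zero_le_one.trans (hge x (mem_Ici.2 (mem_Ioi.1 hx).le))))]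
  exact setLIntegral_congr_fun measurableSet_Ioi fun x hx => by rw [max_eq_left (mem_Ioi.1 hx).le]

theorem stmt11_general (w : ℝ → ℝ) (hmono : MonotoneOn w (Set.Ici 1))
    (hge : ∀ u ∈ Set.Ici (1:ℝ), 1 ≤ w u)
    (hint : IntegrableOn (fun u => 1 / w u) (Set.Ici 1))
    (X : ℝ → ℕ) (hX : Measurable X)
    (L0 L1 : ℝ → ℝ)
    (hL0 : ∀ t, L0 t = 1 + ∫ u in (0:ℝ)..t, (if X u = 0 then (1:ℝ) else 0))
    (hL1 : ∀ t, L1 t = 1 + ∫ u in (0:ℝ)..t, (if X u = 1 then (1:ℝ) else 0)) :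
    (∫ u in Set.Ioi (0:ℝ),
        ((if X u = 0 then (1:ℝ) else 0) / (w (L0 u) * (w (L1 u)) ^ 2) +
          (if X u = 1 then (1:ℝ) else 0) / (w (L1 u) * (w (L0 u)) ^ 2)))
      ≤ 2 * ∫ u in Set.Ioi (1:ℝ), 1 / w u := by
  set f : ℝ → ℝ := fun x => 1 / w (max x 1)
  have hf : Antitone f := antitone_one_div_comp_max hmono hge
  have hf0 : 0 ≤ f := fun x => one_div_nonneg.2 (zero_le_one.trans (hge _ (le_max_right x 1)))
  have hB0 : MeasurableSet {u | X u = 0} := hX (measurableSet_singleton 0)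
  have hB1 : MeasurableSet {u | X u = 1} := hX (measurableSet_singleton 1)
  have hT0 := isLocalTime_setOf_eq hL0
  have hT1 := isLocalTime_setOf_eq hL1
  have hI0 : 0 ≤ ∫ x in Ioi 1, 1 / w x := setIntegral_nonneg measurableSet_Ioi fun x hx =>
    one_div_nonneg.2 (zero_le_one.trans (hge x (mem_Ici.2 (mem_Ioi.1 hx).le)))
  refine integral_le_of_lintegral_enorm_le (by positivity) ?_
  set F0 := {u | X u = 0}.indicator fun u => ENNReal.ofReal (f (L0 u))
  set F1 := {u | X u = 1}.indicator fun u => ENNReal.ofReal (f (L1 u))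
  calc
    _ ≤ ∫⁻ u in Ioi 0, (F0 u + F1 u) := setLIntegral_mono' measurableSet_Ioi fun u hu => by
          have h0 := hT0.one_le hB0 (le_of_lt hu)
          have h1 := hT1.one_le hB1 (le_of_lt hu)
          refine (enorm_ite_div_add_ite_div_le (hge _ h0) (hge _ h1)).trans_eq ?_
          simp [F0, F1, f, indicator_apply, max_eq_left h0, max_eq_left h1]
    _ = (∫⁻ u in Ioi 0, F0 u) + ∫⁻ u in Ioi 0, F1 u := lintegral_add_left (Measurable.indicator
          (hf.measurable.comp (hT0.monotone hB0).measurable).ennreal_ofReal hB0) _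
    _ ≤ (∫⁻ x in Ioi 1, ENNReal.ofReal (f x)) + ∫⁻ x in Ioi 1, ENNReal.ofReal (f x) :=
          add_le_add (hT0.lintegral_indicator_le hB0 hf hf0) (hT1.lintegral_indicator_le hB1 hf hf0)
    _ = ENNReal.ofReal (2 * ∫ x in Ioi 1, 1 / w x) := by
          rw [lintegral_ofReal_one_div_max_eq hge hint, two_mul, ENNReal.ofReal_add hI0 hI0]

/-- For an increasing `w : [1,∞) → [1,∞)` with `∫₁^∞ du/w(u) < ∞` and a two-state process
`X : [0,∞) → {0,1}` with local times `L_i(t) = 1 + ∫₀^t 1{X_u = i} du`, one has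
`∫₀^∞ (1{X_u=0}/(w(L₀(u)) w(L₁(u))²) + 1{X_u=1}/(w(L₁(u)) w(L₀(u))²)) du ≤ 2 ∫₁^∞ du/w(u)`. -/
theorem stmt11 (w : ℝ → ℝ) (hmono : MonotoneOn w (Set.Ici 1))
    (hge : ∀ u ∈ Set.Ici (1:ℝ), 1 ≤ w u)
    (hint : IntegrableOn (fun u => 1 / w u) (Set.Ici 1))
    (X : ℝ → ℕ) (hX : Measurable X) (hX01 : ∀ u, X u = 0 ∨ X u = 1)
    (L0 L1 : ℝ → ℝ)
    (hL0 : ∀ t, L0 t = 1 + ∫ u in (0:ℝ)..t, (if X u = 0 then (1:ℝ) else 0))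
    (hL1 : ∀ t, L1 t = 1 + ∫ u in (0:ℝ)..t, (if X u = 1 then (1:ℝ) else 0)) :
    (∫ u in Set.Ioi (0:ℝ),
        ((if X u = 0 then (1:ℝ) else 0) / (w (L0 u) * (w (L1 u)) ^ 2) +
          (if X u = 1 then (1:ℝ) else 0) / (w (L1 u) * (w (L0 u)) ^ 2)))
      ≤ 2 * ∫ u in Set.Ioi (1:ℝ), 1 / w u :=
  stmt11_general w hmono hge hint X hX L0 L1 hL0 hL1
end

section
/- Let w : [1,∞) → [1,∞) be increasing and let two interleaved sequences be defined by ℓ*₀(n+1) = ℓ*₀(n) + χₙ/w(ℓ*₁(n)) and ℓ̃₀(n+1) = ℓ̃₀(n) + χₙ/w(ℓ̃₁(n)) (similarly for index 1 with another shared sequence of positive numbers), with ℓ*₀(0) = ℓ̃₀(0), ℓ*₁(0) ≥ ℓ̃₁(0). Then by induction, for all n: ℓ̃₀(n) ≥ ℓ*₀(n) and ℓ̃₁(n) ≤ ℓ*₁(n), with strict inequalities for n ≥ 1 if ℓ*₁(0) > ℓ̃₁(0). -/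
/-!
Both systems are driven by the same increments `χ n`, `ψ n`, which are divided by `w` of the
other coordinate. Since `w` is increasing, a larger `ℓ₁` slows down `ℓ₀`, and a smaller `ℓ₀` in
turn speeds up `ℓ₁`; so the order `s0 ≤ t0`, `t1 ≤ s1` propagates from each half-step to the
next, and a strict gap in `ℓ₁` becomes strict in both coordinates after one step.
-/

open Set

/-- `ℓ₀ = a` and `ℓ₁ = b` alternate: `a` moves first, then `b` reacts to the new value of `a`. -/
def IsLocalTimeRec (w : ℝ → ℝ) (χ ψ : ℕ → ℝ) (a b : ℕ → ℝ) : Prop :=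
  (∀ n, a (n + 1) = a n + χ n / w (b n)) ∧ (∀ n, b (n + 1) = b n + ψ n / w (a (n + 1)))

namespace IsLocalTimeRec

variable {w : ℝ → ℝ} {c : ℝ} {χ ψ : ℕ → ℝ}

theorem mem_Ici {a b : ℕ → ℝ} (h : IsLocalTimeRec w χ ψ a b) (hw : ∀ u ∈ Ici c, 0 < w u)
    (hχ : ∀ n, 0 ≤ χ n) (hψ : ∀ n, 0 ≤ ψ n) (ha : c ≤ a 0) (hb : c ≤ b 0) (n : ℕ) :
    c ≤ a n ∧ c ≤ b n := by
  induction n with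
  | zero => exact ⟨ha, hb⟩
  | succ n ih =>
    have ha' : c ≤ a (n + 1) := by
      rw [h.1 n]
      linarith [div_nonneg (hχ n) (hw _ ih.2).le, ih.1]
    refine ⟨ha', ?_⟩
    rw [h.2 n]
    linarith [div_nonneg (hψ n) (hw _ ha').le, ih.2]

variable {s0 s1 t0 t1 : ℕ → ℝ} {n : ℕ}

theorem le_step (hs : IsLocalTimeRec w χ ψ s0 s1) (ht : IsLocalTimeRec w χ ψ t0 t1)
    (hw : ∀ u ∈ Ici c, 0 < w u) (hmono : MonotoneOn w (Ici c)) (hχ : 0 ≤ χ n) (hψ : 0 ≤ ψ n)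
    (ht1 : c ≤ t1 n) (hs0 : c ≤ s0 (n + 1)) (h0 : s0 n ≤ t0 n) (h1 : t1 n ≤ s1 n) :
    s0 (n + 1) ≤ t0 (n + 1) ∧ t1 (n + 1) ≤ s1 (n + 1) := by
  have h0' : s0 (n + 1) ≤ t0 (n + 1) := by
    rw [hs.1 n, ht.1 n]
    exact add_le_add h0
      (div_le_div_of_nonneg_left hχ (hw _ ht1) (hmono ht1 (ht1.trans h1) h1))
  refine ⟨h0', ?_⟩
  rw [hs.2 n, ht.2 n]
  exact add_le_add h1
    (div_le_div_of_nonneg_left hψ (hw _ hs0) (hmono hs0 (hs0.trans h0') h0'))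

theorem lt_step (hs : IsLocalTimeRec w χ ψ s0 s1) (ht : IsLocalTimeRec w χ ψ t0 t1)
    (hw : ∀ u ∈ Ici c, 0 < w u) (hmono : StrictMonoOn w (Ici c)) (hχ : 0 < χ n) (hψ : 0 < ψ n)
    (ht1 : c ≤ t1 n) (hs0 : c ≤ s0 (n + 1)) (h0 : s0 n ≤ t0 n) (h1 : t1 n < s1 n) :
    s0 (n + 1) < t0 (n + 1) ∧ t1 (n + 1) < s1 (n + 1) := by
  have h0' : s0 (n + 1) < t0 (n + 1) := by
    rw [hs.1 n, ht.1 n]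
    exact add_lt_add_of_le_of_lt h0
      (div_lt_div_of_pos_left hχ (hw _ ht1) (hmono ht1 (ht1.trans h1.le) h1))
  refine ⟨h0', ?_⟩
  rw [hs.2 n, ht.2 n]
  exact add_lt_add h1
    (div_lt_div_of_pos_left hψ (hw _ hs0) (hmono hs0 (hs0.trans h0'.le) h0'))

theorem comparison (hs : IsLocalTimeRec w χ ψ s0 s1) (ht : IsLocalTimeRec w χ ψ t0 t1)
    (hw : ∀ u ∈ Ici c, 0 < w u) (hs0c : ∀ n, c ≤ s0 n) (ht1c : ∀ n, c ≤ t1 n)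
    (hmono : MonotoneOn w (Ici c)) (hχ : ∀ n, 0 ≤ χ n) (hψ : ∀ n, 0 ≤ ψ n)
    (h0 : s0 0 ≤ t0 0) (h1 : t1 0 ≤ s1 0) (n : ℕ) : s0 n ≤ t0 n ∧ t1 n ≤ s1 n := by
  induction n with
  | zero => exact ⟨h0, h1⟩
  | succ n ih => exact le_step hs ht hw hmono (hχ n) (hψ n) (ht1c n) (hs0c _) ih.1 ih.2

theorem comparison_strict (hs : IsLocalTimeRec w χ ψ s0 s1) (ht : IsLocalTimeRec w χ ψ t0 t1)
    (hw : ∀ u ∈ Ici c, 0 < w u) (hs0c : ∀ n, c ≤ s0 n) (ht1c : ∀ n, c ≤ t1 n)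
    (hmono : StrictMonoOn w (Ici c)) (hχ : ∀ n, 0 < χ n)
    (hψ : ∀ n, 0 < ψ n) (h0 : s0 0 ≤ t0 0) (h1 : t1 0 < s1 0) (n : ℕ) (hn : 1 ≤ n) :
    s0 n < t0 n ∧ t1 n < s1 n := by
  induction n, hn using Nat.le_induction with
  | base => exact lt_step hs ht hw hmono (hχ 0) (hψ 0) (ht1c 0) (hs0c 1) h0 h1
  | succ n _ ih => exact lt_step hs ht hw hmono (hχ n) (hψ n) (ht1c n) (hs0c _) ih.1.le ih.2

end IsLocalTimeRec

/-- Monotone coupling of two interleaved local-time recursions driven by the same positive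
sequences `χ, ψ`: if `ℓ*₀(0) = ℓ̃₀(0)` and `ℓ*₁(0) ≥ ℓ̃₁(0)` then for all `n`,
`ℓ̃₀(n) ≥ ℓ*₀(n)` and `ℓ̃₁(n) ≤ ℓ*₁(n)`, with strict inequalities for `n ≥ 1` whenever
`ℓ*₁(0) > ℓ̃₁(0)`. -/
theorem stmt17 (w : ℝ → ℝ) (hmono : StrictMonoOn w (Set.Ici 1))
    (hge : ∀ u ∈ Set.Ici (1:ℝ), 1 ≤ w u)
    (χ ψ : ℕ → ℝ) (hχ : ∀ n, 0 < χ n) (hψ : ∀ n, 0 < ψ n)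
    (s0 s1 t0 t1 : ℕ → ℝ)
    (hs0i : 1 ≤ s0 0) (hs1i : 1 ≤ s1 0) (ht0i : 1 ≤ t0 0) (ht1i : 1 ≤ t1 0)
    (hrec_s0 : ∀ n, s0 (n + 1) = s0 n + χ n / w (s1 n))
    (hrec_s1 : ∀ n, s1 (n + 1) = s1 n + ψ n / w (s0 (n + 1)))
    (hrec_t0 : ∀ n, t0 (n + 1) = t0 n + χ n / w (t1 n))
    (hrec_t1 : ∀ n, t1 (n + 1) = t1 n + ψ n / w (t0 (n + 1)))
    (hinit0 : s0 0 = t0 0) (hinit1 : t1 0 ≤ s1 0) :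
    (∀ n, s0 n ≤ t0 n ∧ t1 n ≤ s1 n) ∧
      (t1 0 < s1 0 → ∀ n ≥ 1, s0 n < t0 n ∧ t1 n < s1 n) := by
  have hs : IsLocalTimeRec w χ ψ s0 s1 := ⟨hrec_s0, hrec_s1⟩
  have ht : IsLocalTimeRec w χ ψ t0 t1 := ⟨hrec_t0, hrec_t1⟩
  have hw : ∀ u ∈ Set.Ici (1:ℝ), 0 < w u := fun u hu => one_pos.trans_le (hge u hu)
  have hs0c n := (hs.mem_Ici hw (fun n => (hχ n).le) (fun n => (hψ n).le) hs0i hs1i n).1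
  have ht1c n := (ht.mem_Ici hw (fun n => (hχ n).le) (fun n => (hψ n).le) ht0i ht1i n).2
  exact ⟨hs.comparison ht hw hs0c ht1c hmono.monotoneOn (fun n => (hχ n).le)
      (fun n => (hψ n).le) hinit0.le hinit1,
    fun hlt => hs.comparison_strict ht hw hs0c ht1c hmono hχ hψ hinit0.le hlt⟩
end
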